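/- arXiv:1809.09983 — 2 statements merged into one kernel-verified Lean document; each statement's English description precedes it below -/
import Mathlib

section
/- With the construction below, for every k = 1, …, q one has ∫_{D_n} w_n(ω) cos(t_k ω) dω = 0; that is, w_n is orthogonal in L²(D_n) to each of the functions e_k(ω) = cos(t_k ω), k = 1, …, q. -/
open MeasureTheory Real Filter RealInnerProductSpace

noncomputable section

/-- The set `S_T = {t - s : t, s ∈ T}` of differences of elements of `T`. -/
def STfin (T : Finset ℤ) : Finset ℤ := (T ×ˢ T).image fun p => p.1 - p.2

/-- The set `P_T = {s ∈ S_T : s > 0}` of positive differences. -/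
def PTfin (T : Finset ℤ) : Finset ℤ := (STfin T).filter fun s => 0 < s

/-- The interval `D_n = (π - π/n, π)`. -/
def Dn (n : ℕ) : Set ℝ := Set.Ioo (π - π / n) π

/-- The set `D̃_n = (-π, -π + π/n) ∪ (π - π/n, π)`. -/
def Dtilde (n : ℕ) : Set ℝ := Set.Ioo (-π) (-π + π / n) ∪ Set.Ioo (π - π / n) π

/-- Lebesgue measure restricted to `D_n`. -/
def μn (n : ℕ) : Measure ℝ := volume.restrict (Dn n)

instance (n : ℕ) : IsFiniteMeasure (μn n) := by
  unfold μn Dn; infer_instance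

/-- The constant function `e₀ ≡ 1` as an element of `L²(D_n)`. -/
def e0Lp (n : ℕ) : Lp ℝ 2 (μn n) := (memLp_const (1 : ℝ)).toLp fun _ => (1 : ℝ)

lemma memLp_cos (n : ℕ) (k : ℤ) : MemLp (fun ω : ℝ => Real.cos (k * ω)) 2 (μn n) :=
  MemLp.of_bound (Continuous.aestronglyMeasurable (by continuity)) 1
    (ae_of_all _ fun ω => by simpa using Real.abs_cos_le_one (k * ω))

/-- The function `cos (k ω)` as an element of `L²(D_n)`. -/
def eLp (n : ℕ) (k : ℤ) : Lp ℝ 2 (μn n) := (memLp_cos n k).toLp fun ω => Real.cos (k * ω)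

/-- `t : Fin q → ℤ` enumerates `P_T` in such a way that the elements divisible by `n`
come first, being exactly `t_1, …, t_p` (0-based: `t k` for `k < p`). -/
def IsEnum (T : Finset ℤ) (n q p : ℕ) (t : Fin q → ℤ) : Prop :=
  Function.Injective t ∧ (∀ k, t k ∈ PTfin T) ∧ (∀ s ∈ PTfin T, ∃ k, t k = s) ∧
    ∀ k : Fin q, ((n : ℤ) ∣ t k ↔ (k : ℕ) < p)

/-- The Gram–Schmidt orthonormalisation `v_1, …, v_q` of `cos (t_1 ω), …, cos (t_q ω)`
in `L²(D_n)`. -/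
def vGS (n q : ℕ) (t : Fin q → ℤ) : Fin q → Lp ℝ 2 (μn n) :=
  @InnerProductSpace.gramSchmidtNormed ℝ _ _ _ _ (Fin q) _ _
    (inferInstance : WellFoundedLT (Fin q)) fun k => eLp n (t k)

/-- `ξ_n = e₀ - Σ_{k=p+1}^q ⟨e₀, v_k⟩ v_k`. -/
def xin (n q p : ℕ) (t : Fin q → ℤ) : Lp ℝ 2 (μn n) :=
  e0Lp n - ∑ k ∈ Finset.univ.filter (fun k : Fin q => p ≤ (k : ℕ)),
      ⟪e0Lp n, vGS n q t k⟫ • vGS n q t k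

/-- `w_n = (π - π/n) ξ_n / ⟨ξ_n, e₀⟩`. -/
def wn (n q p : ℕ) (t : Fin q → ℤ) : Lp ℝ 2 (μn n) :=
  ((π - π / n) / ⟪xin n q p t, e0Lp n⟫) • xin n q p t

/-- A representative of `w_n`, extended to negative frequencies by `w_n(-ω) = w_n(ω)`. -/
def wFun (n q p : ℕ) (t : Fin q → ℤ) (ω : ℝ) : ℝ := (wn n q p t : ℝ → ℝ) |ω|

/-- The transfer function `H̃_n`: equal to `1` for `|ω| < π - π/n` and to `-w_n(ω)` for
`π - π/n ≤ |ω| < π`. -/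
def Htilde (n q p : ℕ) (t : Fin q → ℤ) (ω : ℝ) : ℂ :=
  if |ω| < π - π / n then 1 else ((-(wFun n q p t ω) : ℝ) : ℂ)

/-- The kernel `h̃_n = Z⁻¹ H̃_n`. -/
def htilde (n q p : ℕ) (t : Fin q → ℤ) (τ : ℤ) : ℂ :=
  ((1 / (2 * π) : ℝ) : ℂ) *
    ∫ ω in (-π)..π, Htilde n q p t ω * Complex.exp (Complex.I * ω * τ)

/-- The recovering kernel `h_n`: `h̃_n` with the values on `S_T` replaced by `0`. -/
def hnKer (T : Finset ℤ) (n q p : ℕ) (t : Fin q → ℤ) (τ : ℤ) : ℂ :=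
  if τ ∈ STfin T then 0 else htilde n q p t τ

/-- Convolution of two sequences: `(h ∘ x)(t) = Σ_s h(t - s) x(s)`. -/
def conv (h x : ℤ → ℂ) (τ : ℤ) : ℂ := ∑' s : ℤ, h (τ - s) * x s

/-- The class `H_T` of kernels `h ∈ ℓ²` such that `(h ∘ x)(t)` depends only on the values
`x(s)`, `s ∉ T`, for all `t ∈ T`. -/
def HT (T : Finset ℤ) : Set (ℤ → ℂ) :=
  {h | Memℓp h 2 ∧ ∀ x : ℤ → ℂ, Memℓp x 2 → ∀ t ∈ T,
      conv h x t = ∑' s : {s : ℤ // s ∉ T}, h (t - (s : ℤ)) * x s}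

/-! Every frequency `t_i` with `i < p` is a nonzero multiple of `n`, and `cos (n m ω)` has
zero mean over `D_n` because `n m π` and `n m (π - π/n)` are multiples of `π`. Since `v_j` lies
in the span of `e_1, …, e_j`, this gives `⟨e₀, v_j⟩ = 0` for `j < p`, so `ξ_n` is the residual
`e₀ - Σ_k ⟨e₀, v_k⟩ v_k` over all `k`. Each `v_k` is a unit vector or zero, so this residual is
orthogonal to every `v_k`, hence to their span, which contains every `e_k`. -/

open InnerProductSpace Submodule

section GramSchmidt

variable {𝕜 E ι : Type*} [RCLike 𝕜] [NormedAddCommGroup E] [InnerProductSpace 𝕜 E]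
  [LinearOrder ι] [LocallyFiniteOrderBot ι] [WellFoundedLT ι]

theorem inner_eq_zero_of_mem_span {y x : E} {s : Set E} (h : ∀ u ∈ s, ⟪y, u⟫_𝕜 = 0)
    (hx : x ∈ span 𝕜 s) : ⟪y, x⟫_𝕜 = 0 :=
  mem_orthogonal_singleton_iff_inner_right.1 <|
    (span_le (p := (𝕜 ∙ y)ᗮ)).2
      (fun u hu => mem_orthogonal_singleton_iff_inner_right.2 (h u hu)) hx

theorem inner_gramSchmidtNormed_of_ne (f : ι → E) {i j : ι} (hij : i ≠ j) :
    ⟪gramSchmidtNormed 𝕜 f i, gramSchmidtNormed 𝕜 f j⟫_𝕜 = 0 := by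
  simp [gramSchmidtNormed, inner_smul_left, inner_smul_right, gramSchmidt_orthogonal 𝕜 f hij]

theorem inner_gramSchmidtNormed_eq_zero_of_forall_le (f : ι → E) {x : E} {j : ι}
    (h : ∀ i ≤ j, ⟪x, f i⟫_𝕜 = 0) : ⟪x, gramSchmidtNormed 𝕜 f j⟫_𝕜 = 0 := by
  refine inner_eq_zero_of_mem_span ?_ <| smul_mem _ _ (gramSchmidt_mem_span 𝕜 f le_rfl)
  rintro _ ⟨i, hi, rfl⟩
  exact h i hi

variable [Fintype ι]

theorem inner_gramSchmidtNormed_sub_sum (f : ι → E) (x : E) (j : ι) :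
    ⟪gramSchmidtNormed 𝕜 f j,
      x - ∑ k, ⟪gramSchmidtNormed 𝕜 f k, x⟫_𝕜 • gramSchmidtNormed 𝕜 f k⟫_𝕜 = 0 := by
  have hoff : ∀ k ≠ j, ⟪gramSchmidtNormed 𝕜 f j,
      ⟪gramSchmidtNormed 𝕜 f k, x⟫_𝕜 • gramSchmidtNormed 𝕜 f k⟫_𝕜 = 0 := fun k hkj => by
    rw [inner_smul_right, inner_gramSchmidtNormed_of_ne f hkj.symm, mul_zero]
  rw [inner_sub_right, inner_sum, Finset.sum_eq_single j (fun k _ => hoff k) (by simp),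
    inner_smul_right]
  rcases eq_or_ne (gramSchmidtNormed 𝕜 f j) 0 with hv | hv
  · simp [hv]
  · rw [inner_self_eq_one_of_norm_eq_one (gramSchmidtNormed_unit_length' hv), mul_one, sub_self]

theorem inner_sub_sum_gramSchmidtNormed (f : ι → E) (x : E) (j : ι) :
    ⟪x - ∑ k, ⟪gramSchmidtNormed 𝕜 f k, x⟫_𝕜 • gramSchmidtNormed 𝕜 f k, f j⟫_𝕜 = 0 := by
  have hf : f j ∈ span 𝕜 (Set.range (gramSchmidtNormed 𝕜 f)) := by
    rw [span_gramSchmidtNormed_range, span_gramSchmidt]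
    exact subset_span ⟨j, rfl⟩
  refine inner_eq_zero_of_mem_span ?_ hf
  rintro _ ⟨k, rfl⟩
  exact inner_eq_zero_symm.1 (inner_gramSchmidtNormed_sub_sum f x k)

end GramSchmidt

theorem integral_cos_Dn_eq_zero {n : ℕ} {s : ℤ} (hs : s ≠ 0) (hd : (n : ℤ) ∣ s) :
    ∫ ω in Dn n, Real.cos (s * ω) = 0 := by
  obtain ⟨m, rfl⟩ := hd
  have hn : (n : ℝ) ≠ 0 := by exact_mod_cast left_ne_zero_of_mul hs
  have hle : π - π / n ≤ π := sub_le_self _ (by positivity)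
  rw [Dn, ← integral_Ioc_eq_integral_Ioo, ← intervalIntegral.integral_of_le hle,
    intervalIntegral.integral_comp_mul_left Real.cos (by exact_mod_cast hs), integral_cos]
  have hlow : ((n * m : ℤ) : ℝ) * (π - π / n) = ((n * m - m : ℤ) : ℝ) * π := by
    push_cast; field_simp
  rw [hlow, Real.sin_int_mul_pi, Real.sin_int_mul_pi, sub_zero, smul_zero]

theorem inner_eLp (n : ℕ) (f : Lp ℝ 2 (μn n)) (s : ℤ) :
    ⟪f, eLp n s⟫ = ∫ ω in Dn n, f ω * Real.cos (s * ω) := by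
  rw [L2.inner_def]
  refine integral_congr_ae ?_
  filter_upwards [MemLp.coeFn_toLp (memLp_cos n s)] with ω hω
  rw [eLp, hω, real_inner_eq_re_inner, RCLike.inner_apply, conj_trivial, mul_comm]
  rfl

theorem inner_e0Lp_eLp_eq_zero {n : ℕ} {s : ℤ} (hs : s ≠ 0) (hd : (n : ℤ) ∣ s) :
    ⟪e0Lp n, eLp n s⟫ = 0 := by
  rw [inner_eLp, ← integral_cos_Dn_eq_zero hs hd]
  refine integral_congr_ae ?_
  filter_upwards [MemLp.coeFn_toLp (memLp_const (μ := μn n) (1 : ℝ))] with ω hω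
  rw [e0Lp, hω, one_mul]

section Enumeration

variable {T : Finset ℤ} {n q p : ℕ} {t : Fin q → ℤ}

theorem IsEnum.pos (h : IsEnum T n q p t) (i : Fin q) : 0 < t i :=
  (Finset.mem_filter.1 (h.2.1 i)).2

theorem IsEnum.dvd (h : IsEnum T n q p t) {i : Fin q} (hi : (i : ℕ) < p) : (n : ℤ) ∣ t i :=
  (h.2.2.2 i).2 hi

theorem inner_e0Lp_vGS_eq_zero (henum : IsEnum T n q p t) {j : Fin q} (hj : (j : ℕ) < p) :
    ⟪e0Lp n, vGS n q t j⟫ = 0 :=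
  inner_gramSchmidtNormed_eq_zero_of_forall_le _ fun i hi =>
    inner_e0Lp_eLp_eq_zero (henum.pos i).ne' (henum.dvd (lt_of_le_of_lt hi hj))

theorem xin_eq_sub_sum (henum : IsEnum T n q p t) :
    xin n q p t = e0Lp n - ∑ k, ⟪vGS n q t k, e0Lp n⟫ • vGS n q t k := by
  rw [xin, Finset.sum_subset (Finset.subset_univ _) fun k _ hk => ?_]
  · simp_rw [real_inner_comm (e0Lp n)]
  · rw [inner_e0Lp_vGS_eq_zero henum (by simpa using hk), zero_smul]

theorem inner_xin_eLp (henum : IsEnum T n q p t) (k : Fin q) : ⟪xin n q p t, eLp n (t k)⟫ = 0 := by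
  rw [xin_eq_sub_sum henum]
  exact inner_sub_sum_gramSchmidtNormed _ _ k

end Enumeration

theorem wn_orthogonal_cos_general (T : Finset ℤ) (n : ℕ) (q p : ℕ)
    (t : Fin q → ℤ) (henum : IsEnum T n q p t) (k : Fin q) :
    (∫ ω in Dn n, (wn n q p t : ℝ → ℝ) ω * Real.cos ((t k : ℝ) * ω)) = 0 ∧
    ⟪wn n q p t, eLp n (t k)⟫ = 0 := by
  have h : ⟪wn n q p t, eLp n (t k)⟫ = 0 := by
    rw [wn, real_inner_smul_left, inner_xin_eLp henum k, mul_zero]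
  exact ⟨(inner_eLp n _ (t k)).symm.trans h, h⟩

/-- `w_n` is orthogonal in `L²(D_n)` to each of the functions `cos (t_k ω)`, `k = 1, …, q`:
`∫_{D_n} w_n(ω) cos (t_k ω) dω = 0`. -/
theorem wn_orthogonal_cos (T : Finset ℤ) (n : ℕ) (hn : 1 < n) (q p : ℕ)
    (t : Fin q → ℤ) (henum : IsEnum T n q p t) (k : Fin q) :
    (∫ ω in Dn n, (wn n q p t : ℝ → ℝ) ω * Real.cos ((t k : ℝ) * ω)) = 0 ∧
    ⟪wn n q p t, eLp n (t k)⟫ = 0 :=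
  wn_orthogonal_cos_general T n q p t henum k

end
end

section
/- With the construction below, for every x ∈ X_T one has sup_{t∈ℤ} |x(t) − x̃_n(t)| → 0 as n → ∞, where x̃_n(t) = (1/2π)∫_{−π}^{π} H̃_n(e^{iω}) X(e^{iω}) e^{iωt} dω and X is the Z-transform of x. -/
open MeasureTheory Real Filter RealInnerProductSpace

noncomputable section

/-- `X` is (a representative of) the Z-transform of `x ∈ ℓ²(ℤ)`: `X ∈ L²((-π, π])` and
the Fourier coefficients of `X` are the values of `x`. -/
def IsZTransform (x : ℤ → ℂ) (X : ℝ → ℂ) : Prop :=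
  MemLp X 2 (volume.restrict (Set.Ioc (-π) π)) ∧
  ∀ τ : ℤ, x τ =
    ((1 / (2 * π) : ℝ) : ℂ) * ∫ ω in (-π)..π, X ω * Complex.exp (Complex.I * ω * τ)

/-!
Since `X` is the Z-transform of `x`, the error `x τ - x̃_n τ` is `(1/2π) ∫ (1 - H̃_n) X e^{iωτ}`.
The factor `1 - H̃_n` vanishes on the passband `|ω| < π - π/n` and equals `1 + w_n` on `D̃_n`
(up to finitely many points), so the error is bounded uniformly in `τ` by
`(1/2π) (∫_{D̃_n} |X| + ∫_{D̃_n} |w_n X|)`. The first integral tends to zero by absolute continuity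
of the integral, as `|D̃_n| = 2π/n`, and the second one does by the definition of `X_T`.
-/

open Set Complex

lemma norm_mul_cexp_I_mul (z : ℂ) (ω : ℝ) (τ : ℤ) : ‖z * cexp (I * ω * τ)‖ = ‖z‖ := by
  rw [norm_mul, mul_assoc, ← ofReal_intCast, ← ofReal_mul, norm_exp_I_mul_ofReal, mul_one]

lemma MeasureTheory.Integrable.mul_cexp_I_mul {μ : Measure ℝ} {g : ℝ → ℂ}
    (hg : Integrable g μ) (τ : ℤ) : Integrable (fun ω => g ω * cexp (I * ω * τ)) μ :=
  hg.mono (hg.aestronglyMeasurable.mul (by fun_prop : Continuous _).aestronglyMeasurable)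
    (ae_of_all _ fun ω => (norm_mul_cexp_I_mul _ ω τ).le)

lemma MeasureTheory.MemLp.comp_abs_restrict_neg {E : Type*} [NormedAddCommGroup E] {p : ENNReal}
    {f : ℝ → E} {s : Set ℝ} (hs : MeasurableSet s) (hs₀ : s ⊆ Ici 0)
    (hf : MemLp f p (volume.restrict s)) :
    MemLp (fun ω => f |ω|) p (volume.restrict (-s)) := by
  have hneg : MeasurePreserving Neg.neg (volume.restrict (-s)) (volume.restrict s) := by
    simpa [neg_preimage] using (Measure.measurePreserving_neg volume).restrict_preimage hs
  refine (hf.comp_measurePreserving hneg).ae_eq ?_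
  filter_upwards [ae_restrict_mem hs.neg] with ω hω
  simp [abs_of_nonpos (neg_nonneg.1 (mem_Ici.1 (hs₀ hω)))]

lemma MeasureTheory.MemLp.comp_abs_restrict {E : Type*} [NormedAddCommGroup E] {p : ENNReal}
    {f : ℝ → E} {s : Set ℝ} (hs : MeasurableSet s) (hs₀ : s ⊆ Ici 0)
    (hf : MemLp f p (volume.restrict s)) :
    MemLp (fun ω => f |ω|) p (volume.restrict s) := by
  refine hf.ae_eq ?_
  filter_upwards [ae_restrict_mem hs] with ω hω
  rw [abs_of_nonneg (hs₀ hω)]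

lemma integrableOn_neg_union_comp_abs_mul {p q : ENNReal} [p.HolderTriple q 1] {f : ℝ → ℝ}
    {g : ℝ → ℂ} {s : Set ℝ} (hs : MeasurableSet s) (hs₀ : s ⊆ Ici 0)
    (hf : MemLp f p (volume.restrict s)) (hg : MemLp g q (volume.restrict (-s ∪ s))) :
    IntegrableOn (fun ω => (f |ω| : ℂ) * g ω) (-s ∪ s) :=
  IntegrableOn.union
    ((hf.comp_abs_restrict_neg hs hs₀).ofReal.integrable_mul
      (hg.mono_measure (Measure.restrict_mono subset_union_left le_rfl)))
    ((hf.comp_abs_restrict hs hs₀).ofReal.integrable_mul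
      (hg.mono_measure (Measure.restrict_mono subset_union_right le_rfl)))

def stopband (a : ℝ) : Set ℝ := -Ioo a π ∪ Ioo a π

lemma measurableSet_stopband (a : ℝ) : MeasurableSet (stopband a) :=
  measurableSet_Ioo.neg.union measurableSet_Ioo

lemma stopband_subset_Ioc {a : ℝ} (ha : 0 ≤ a) : stopband a ⊆ Ioc (-π) π := by
  rintro ω (⟨h₁, h₂⟩ | ⟨h₁, h₂⟩)
  · exact ⟨by linarith, by linarith⟩
  · exact ⟨by linarith, h₂.le⟩

lemma volume_stopband_le (a : ℝ) : volume (stopband a) ≤ 2 * ENNReal.ofReal (π - a) :=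
  (measure_union_le _ _).trans (by rw [Measure.measure_neg, Real.volume_Ioo, two_mul])

def bandFilter (a : ℝ) (w : ℝ → ℝ) (ω : ℝ) : ℂ := if |ω| < a then 1 else ((-(w ω) : ℝ) : ℂ)

lemma sub_bandFilter_mul_ae_eq (a : ℝ) (w : ℝ → ℝ) (f : ℝ → ℂ) :
    ∀ᵐ ω ∂volume.restrict (Ioc (-π) π), f ω - bandFilter a w ω * f ω =
      (stopband a).indicator (fun ω => f ω + (w ω : ℂ) * f ω) ω := by
  -- away from `±a` and `π`, the passband and `stopband a` partition `(-π, π]`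
  have hfin : ∀ᵐ ω ∂volume, ω ∉ ({a, -a, π} : Set ℝ) :=
    measure_eq_zero_iff_ae_notMem.1 ((toFinite _).measure_zero _)
  rw [ae_restrict_iff' measurableSet_Ioc]
  filter_upwards [hfin] with ω hω ⟨h₁, h₂⟩
  simp only [mem_insert_iff, mem_singleton_iff, not_or] at hω
  obtain ⟨hne_a, hne_neg_a, hne_pi⟩ := hω
  by_cases h : |ω| < a
  · have hω : ω ∉ stopband a := by
      rintro (⟨h₃, h₄⟩ | ⟨h₃, h₄⟩) <;> cases abs_cases ω <;> linarith
    simp [bandFilter, h, hω]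
  · have hω : ω ∈ stopband a := by
      rcases abs_cases ω with ⟨habs, h0⟩ | ⟨habs, h0⟩
      · exact Or.inr ⟨lt_of_le_of_ne (by linarith) (Ne.symm hne_a), lt_of_le_of_ne h₂ hne_pi⟩
      · exact Or.inl ⟨lt_of_le_of_ne (by linarith) fun h' => hne_neg_a (by linarith), by linarith⟩
    rw [bandFilter, if_neg h, indicator_of_mem hω]
    push_cast
    ring

section BandFilter

variable {a : ℝ} {w : ℝ → ℝ} {f : ℝ → ℂ}

lemma integrableOn_bandFilter_mul (ha : 0 ≤ a) (hf : IntegrableOn f (Ioc (-π) π))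
    (hwf : IntegrableOn (fun ω => (w ω : ℂ) * f ω) (stopband a)) :
    IntegrableOn (fun ω => bandFilter a w ω * f ω) (Ioc (-π) π) := by
  have hind : IntegrableOn ((stopband a).indicator fun ω => f ω + (w ω : ℂ) * f ω) (Ioc (-π) π) :=
    (((hf.mono_set (stopband_subset_Ioc ha)).add hwf).integrable_indicator
      (measurableSet_stopband a)).integrableOn
  refine (hf.sub hind).congr ?_
  filter_upwards [sub_bandFilter_mul_ae_eq a w f] with ω h
  simp only [Pi.sub_apply, ← h, sub_sub_cancel]

lemma integral_sub_integral_bandFilter_mul (ha : 0 ≤ a) (hf : IntegrableOn f (Ioc (-π) π))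
    (hwf : IntegrableOn (fun ω => (w ω : ℂ) * f ω) (stopband a)) :
    (∫ ω in Ioc (-π) π, f ω) - ∫ ω in Ioc (-π) π, bandFilter a w ω * f ω =
      ∫ ω in stopband a, (f ω + (w ω : ℂ) * f ω) := by
  rw [← integral_sub hf (integrableOn_bandFilter_mul ha hf hwf),
    integral_congr_ae (sub_bandFilter_mul_ae_eq a w f),
    setIntegral_indicator (measurableSet_stopband a), inter_eq_right.2 (stopband_subset_Ioc ha)]

lemma norm_integral_sub_integral_bandFilter_mul_le (ha : 0 ≤ a) (hf : IntegrableOn f (Ioc (-π) π))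
    (hwf : IntegrableOn (fun ω => (w ω : ℂ) * f ω) (stopband a)) :
    ‖(∫ ω in Ioc (-π) π, f ω) - ∫ ω in Ioc (-π) π, bandFilter a w ω * f ω‖ ≤
      (∫ ω in stopband a, ‖f ω‖) + ∫ ω in stopband a, ‖(w ω : ℂ) * f ω‖ := by
  have hf' := hf.mono_set (stopband_subset_Ioc ha)
  rw [integral_sub_integral_bandFilter_mul ha hf hwf, ← integral_add hf'.norm hwf.norm]
  exact norm_integral_le_of_norm_le (hf'.norm.add hwf.norm) (ae_of_all _ fun ω => norm_add_le _ _)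

lemma norm_sub_bandFilter_inversion_le {x : ℤ → ℂ} {X : ℝ → ℂ} (ha : 0 ≤ a)
    (hX : IsZTransform x X) (hwX : IntegrableOn (fun ω => (w ω : ℂ) * X ω) (stopband a))
    (τ : ℤ) :
    ‖x τ - ((1 / (2 * π) : ℝ) : ℂ) *
        ∫ ω in (-π)..π, bandFilter a w ω * X ω * cexp (I * ω * τ)‖ ≤
      1 / (2 * π) * ((∫ ω in stopband a, ‖X ω‖) + ∫ ω in stopband a, ‖(w ω : ℂ) * X ω‖) := by
  have hXe : IntegrableOn (fun ω => X ω * cexp (I * ω * τ)) (Ioc (-π) π) :=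
    (hX.1.integrable one_le_two).mul_cexp_I_mul τ
  have hwXe : IntegrableOn (fun ω => (w ω : ℂ) * (X ω * cexp (I * ω * τ))) (stopband a) :=
    (hwX.mul_cexp_I_mul τ).congr (ae_of_all _ fun _ => mul_assoc _ _ _)
  have hbound := norm_integral_sub_integral_bandFilter_mul_le ha hXe hwXe
  simp only [← mul_assoc, norm_mul_cexp_I_mul] at hbound
  rw [hX.2 τ, ← mul_sub, norm_mul, intervalIntegral.integral_of_le (by linarith [pi_pos]),
    intervalIntegral.integral_of_le (by linarith [pi_pos]), norm_real,
    Real.norm_of_nonneg (by positivity)]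
  exact mul_le_mul_of_nonneg_left hbound (by positivity)

end BandFilter

lemma Dtilde_eq_stopband (n : ℕ) : Dtilde n = stopband (π - π / n) := by
  rw [Dtilde, stopband, neg_Ioo, neg_sub, neg_add_eq_sub]

lemma zero_le_pi_sub_pi_div_natCast (n : ℕ) : 0 ≤ π - π / n := by
  rcases Nat.eq_zero_or_pos n with rfl | hn
  · simpa using pi_pos.le
  · exact sub_nonneg.2 (div_le_self pi_pos.le (by exact_mod_cast hn))

lemma tendsto_setIntegral_Dtilde_nhds_zero {E : Type*} [NormedAddCommGroup E] [NormedSpace ℝ E]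
    {f : ℝ → E} (hf : IntegrableOn f (Ioc (-π) π)) :
    Tendsto (fun n : ℕ => ∫ ω in Dtilde n, f ω) atTop (nhds 0) := by
  have hsub (n : ℕ) : Dtilde n ⊆ Ioc (-π) π :=
    Dtilde_eq_stopband n ▸ stopband_subset_Ioc (zero_le_pi_sub_pi_div_natCast n)
  have hsmall : Tendsto (fun n : ℕ => 2 * ENNReal.ofReal (π / n)) atTop (nhds 0) := by
    simpa using ENNReal.Tendsto.const_mul
      (ENNReal.tendsto_ofReal (tendsto_const_div_atTop_nhds_zero_nat π))
      (Or.inr ENNReal.ofNat_ne_top)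
  have hvol : Tendsto (fun n : ℕ => volume.restrict (Ioc (-π) π) (Dtilde n)) atTop (nhds 0) := by
    refine tendsto_of_tendsto_of_tendsto_of_le_of_le tendsto_const_nhds hsmall (fun _ => bot_le)
      fun n => (Measure.restrict_apply_le _ _).trans ?_
    rw [Dtilde_eq_stopband]
    simpa only [sub_sub_cancel] using volume_stopband_le (π - π / n)
  refine (hf.tendsto_setIntegral_nhds_zero hvol).congr fun n => ?_
  rw [Measure.restrict_restrict (Dtilde_eq_stopband n ▸ measurableSet_stopband _),
    inter_eq_left.2 (hsub n)]

lemma Htilde_eq_bandFilter (n q p : ℕ) (t : Fin q → ℤ) :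
    Htilde n q p t = bandFilter (π - π / n) (wFun n q p t) := rfl

lemma integrableOn_stopband_wFun_mul (n q p : ℕ) (t : Fin q → ℤ) {X : ℝ → ℂ}
    (hX : MemLp X 2 (volume.restrict (Ioc (-π) π))) :
    IntegrableOn (fun ω => (wFun n q p t ω : ℂ) * X ω) (stopband (π - π / n)) := by
  have h₀ := zero_le_pi_sub_pi_div_natCast n
  exact integrableOn_neg_union_comp_abs_mul measurableSet_Ioo (fun ω hω => le_trans h₀ hω.1.le)
    (Lp.memLp (wn n q p t))
    (hX.mono_measure (Measure.restrict_mono (stopband_subset_Ioc h₀) le_rfl))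

theorem recovery_by_htilde_general (q : ℕ)
    (p : ℕ → ℕ) (t : ∀ n : ℕ, Fin q → ℤ)
    (x : ℤ → ℂ) (X : ℝ → ℂ) (hX : IsZTransform x X)
    (hdeg : Tendsto
      (fun n : ℕ => ∫ ω in Dtilde n, ‖((wFun n q (p n) (t n) ω : ℝ) : ℂ) * X ω‖)
      atTop (nhds 0)) :
    ∀ ε > (0 : ℝ), ∃ N : ℕ, ∀ n ≥ N, ∀ τ : ℤ,
      ‖x τ - ((1 / (2 * π) : ℝ) : ℂ) *
          ∫ ω in (-π)..π,
            Htilde n q (p n) (t n) ω * X ω * Complex.exp (Complex.I * ω * τ)‖ ≤ ε := by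
  intro ε hε
  have hbound : Tendsto (fun n : ℕ => 1 / (2 * π) * ((∫ ω in Dtilde n, ‖X ω‖) +
      ∫ ω in Dtilde n, ‖((wFun n q (p n) (t n) ω : ℝ) : ℂ) * X ω‖)) atTop (nhds 0) := by
    simpa using ((tendsto_setIntegral_Dtilde_nhds_zero (hX.1.integrable one_le_two).norm).add
      hdeg).const_mul (1 / (2 * π))
  obtain ⟨N, hN⟩ := eventually_atTop.1 (hbound.eventually (ge_mem_nhds hε))
  refine ⟨N, fun n hn τ => le_trans ?_ (hN n hn)⟩
  rw [Htilde_eq_bandFilter, Dtilde_eq_stopband]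
  exact norm_sub_bandFilter_inversion_le (zero_le_pi_sub_pi_div_natCast n) hX
    (integrableOn_stopband_wFun_mul n q (p n) (t n) hX.1) τ

/-- For every `x ∈ X_T`, `sup_{t ∈ ℤ} |x(t) - x̃_n(t)| → 0` as `n → ∞`, where
`x̃_n(t) = (1/2π) ∫_{-π}^{π} H̃_n(e^{iω}) X(e^{iω}) e^{iωt} dω`. -/
theorem recovery_by_htilde (T : Finset ℤ) (q : ℕ) (hq : q = (PTfin T).card)
    (p : ℕ → ℕ) (t : ∀ n : ℕ, Fin q → ℤ)
    (henum : ∀ n : ℕ, 1 < n → IsEnum T n q (p n) (t n))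
    (x : ℤ → ℂ) (hx : Memℓp x 2) (X : ℝ → ℂ) (hX : IsZTransform x X)
    (hdeg : Tendsto
      (fun n : ℕ => ∫ ω in Dtilde n, ‖((wFun n q (p n) (t n) ω : ℝ) : ℂ) * X ω‖)
      atTop (nhds 0)) :
    ∀ ε > (0 : ℝ), ∃ N : ℕ, ∀ n ≥ N, ∀ τ : ℤ,
      ‖x τ - ((1 / (2 * π) : ℝ) : ℂ) *
          ∫ ω in (-π)..π,
            Htilde n q (p n) (t n) ω * X ω * Complex.exp (Complex.I * ω * τ)‖ ≤ ε :=
  recovery_by_htilde_general q p t x X hX hdeg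

end
end
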